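/- Let k ≥ 1 and c ≥ 1 be integers and let G be a finite nilpotent group of nilpotency class at most k whose order is divisible only by primes p with p ≥ k+1 (equivalently, k ≤ p−1 for every prime divisor p of |G|). Then for any free presentation G = F/R (F free, R normal of finite index with γ_{k+1}(F) ≤ R), every g ∈ R ∩ γ_{c+1}(F) satisfies g^(exp(G)) ∈ [R, cF]; that is, the exponent of M^(c)(G) divides exp(G). -/

import Mathlib

/-!
Let `e = exp(F/R)` and pass to `H = F/[R,cF]` and `N = R/[R,cF]`: then `γ_{k+c+1}(H) = 1`,
`γ_{k+1}(H) ≤ N` and `x^e ∈ N` for every `x ∈ H`. We show `u^e ∈ [N,sH]` for all `u ∈ γ_{t+1}(H)`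
with `s ≤ t`, by induction on `s` and downward induction on `t`. For a generator
`[p,q] = p · q p⁻¹ q⁻¹` of `γ_{t+1}(H)`, the inductive hypothesis gives
`p^e (q p⁻¹ q⁻¹)^e = [p^e, q] ∈ [N,(s+1)H]`, and the Hall–Petrescu formula
`(ab)^e = a^e b^e ∏_{i ≥ 2} c_i^{C(e,i)}` with `c_i ∈ γ_i⟨a,b⟩` controls the difference: for
`i ≤ k` every prime divisor of `e` exceeds `i`, so `e ∣ C(e,i)` and `c_i^{C(e,i)}` is a power of
`c_i^e` with `c_i` deeper in the lower central series, while for `i > k` the element `c_i` already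
lies in `γ_{k+s+2}(H) ≤ [N,(s+1)H]`. Products of elements of `γ_{t+1}(H)` are handled the same way.

The Hall–Petrescu formula comes from Leibman's theorem that polynomial sequences in a group are
closed under products, inverses and commutators: `j ↦ (a^j b^j)⁻¹ (ab)^j` is polynomial, and in a
nilpotent group every polynomial sequence has a Newton expansion `∏ d_i^{C(j,i)}` with
`d_i ∈ γ_i`, by induction on the class using Newton's interpolation formula in the last, central,
term of the lower central series.
-/

/-- `[R, cF]`: the iterated commutator subgroup, `[R, 0F] = R`,
`[R, (i+1)F] = ⁅[R, iF], F⁆`. -/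
def iteratedCommutator {F : Type*} [Group F] (R : Subgroup F) : ℕ → Subgroup F
  | 0 => R
  | c + 1 => ⁅iteratedCommutator R c, (⊤ : Subgroup F)⁆

open Subgroup
open scoped commutatorElement

section CommutatorCalculus

variable {G K : Type*} [Group G] [Group K]

theorem commutator_commutator_le_of_rotate {A B C M : Subgroup G} [M.Normal]
    (h1 : ⁅⁅B, C⁆, A⁆ ≤ M) (h2 : ⁅⁅C, A⁆, B⁆ ≤ M) : ⁅⁅A, B⁆, C⁆ ≤ M := by
  simp only [← QuotientGroup.ker_mk' M, ← Subgroup.map_eq_bot_iff, map_commutator] at h1 h2 ⊢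
  exact commutator_commutator_eq_bot_of_rotate h1 h2

theorem commutator_lowerCentralSeries_le (n m : ℕ) :
    ⁅(⊤ : Subgroup G).lowerCentralSeries n, (⊤ : Subgroup G).lowerCentralSeries m⁆ ≤
      (⊤ : Subgroup G).lowerCentralSeries (n + m + 1) := by
  induction m generalizing n with
  | zero => rfl
  | succ m ih =>
    rw [Subgroup.lowerCentralSeries_succ, commutator_comm]
    apply commutator_commutator_le_of_rotate
    · rw [commutator_comm ⊤, ← Subgroup.lowerCentralSeries_succ,
        show n + (m + 1) + 1 = n + 1 + m + 1 by omega]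
      exact ih (n + 1)
    · rw [show n + (m + 1) + 1 = n + m + 1 + 1 by omega, Subgroup.lowerCentralSeries_succ]
      exact commutator_mono (ih n) le_rfl

theorem commutator_closure_pair_le {X : Subgroup G} [X.Normal] {a b : G} (h : ⁅a, b⁆ ∈ X) :
    ⁅closure {a, b}, closure {a, b}⁆ ≤ X := by
  rw [← QuotientGroup.ker_mk' X, ← Subgroup.map_eq_bot_iff, map_commutator,
    MonoidHom.map_closure, commutator_self_eq_bot_iff]
  apply isMulCommutative_closure
  have hab : QuotientGroup.mk' X a * QuotientGroup.mk' X b =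
      QuotientGroup.mk' X b * QuotientGroup.mk' X a := by
    rw [← commutatorElement_eq_one_iff_mul_comm, ← map_commutatorElement,
      ← MonoidHom.mem_ker, QuotientGroup.ker_mk']
    exact h
  simp only [Set.image_insert_eq, Set.image_singleton, Set.mem_insert_iff,
    Set.mem_singleton_iff]
  rintro x (rfl | rfl) y (rfl | rfl)
  exacts [rfl, hab, hab.symm, rfl]

theorem lowerCentralSeries_closure_pair_le {a b : G} {t : ℕ}
    (ha : a ∈ (⊤ : Subgroup G).lowerCentralSeries t)
    (hb : b ∈ (⊤ : Subgroup G).lowerCentralSeries t)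
    (hab : ⁅a, b⁆ ∈ (⊤ : Subgroup G).lowerCentralSeries (2 * t + 2)) (j : ℕ) :
    (closure {a, b}).lowerCentralSeries (j + 1) ≤
      (⊤ : Subgroup G).lowerCentralSeries ((j + 2) * (t + 1)) := by
  induction j with
  | zero =>
    rw [show (0 + 2) * (t + 1) = 2 * t + 2 by ring]
    exact commutator_closure_pair_le hab
  | succ j ih =>
    have hB : closure {a, b} ≤ (⊤ : Subgroup G).lowerCentralSeries t := by
      simpa [closure_le, Set.insert_subset_iff] using ⟨ha, hb⟩
    rw [Subgroup.lowerCentralSeries_succ,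
      show (j + 1 + 2) * (t + 1) = (j + 2) * (t + 1) + t + 1 by ring]
    exact (commutator_mono ih hB).trans (commutator_lowerCentralSeries_le _ _)

instance iteratedCommutator_normal (N : Subgroup G) [N.Normal] :
    ∀ s, (iteratedCommutator N s).Normal
  | 0 => ‹N.Normal›
  | s + 1 => have := iteratedCommutator_normal N s; commutator_normal _ _

theorem lowerCentralSeries_le_iteratedCommutator {N : Subgroup G} {k : ℕ}
    (hN : (⊤ : Subgroup G).lowerCentralSeries k ≤ N) (s : ℕ) :
    (⊤ : Subgroup G).lowerCentralSeries (k + s) ≤ iteratedCommutator N s := by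
  induction s with
  | zero => exact hN
  | succ s ih => exact commutator_mono ih le_rfl

theorem map_iteratedCommutator {φ : G →* K} (hφ : Function.Surjective φ) (N : Subgroup G)
    (s : ℕ) : (iteratedCommutator N s).map φ = iteratedCommutator (N.map φ) s := by
  induction s with
  | zero => rfl
  | succ s ih => simp only [iteratedCommutator, map_commutator, ih, map_top_of_surjective φ hφ]

end CommutatorCalculus

section PolynomialSequences

variable {G K : Type*} [Group G] [Group K]

/-- `γ_v(G)` in the classical one-based indexing of the lower central series, extended by
`γ_0 = γ_1 = G`. -/
def lowerCentralTerm (G : Type*) [Group G] : ℕ → Subgroup G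
  | 0 => ⊤
  | n + 1 => (⊤ : Subgroup G).lowerCentralSeries n

theorem lowerCentralTerm_antitone : Antitone (lowerCentralTerm G) := by
  refine antitone_nat_of_succ_le fun v => ?_
  cases v with
  | zero => exact le_top
  | succ v => exact Subgroup.lowerCentralSeries_antitone ⊤ v.le_succ

instance lowerCentralTerm_normal (v : ℕ) : (lowerCentralTerm G v).Normal := by
  cases v <;> dsimp only [lowerCentralTerm] <;> infer_instance

theorem commutator_lowerCentralTerm_le :
    ∀ v w, ⁅lowerCentralTerm G v, lowerCentralTerm G w⁆ ≤ lowerCentralTerm G (v + w)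
  | 0, w => (commutator_le_right _ _).trans_eq (by rw [Nat.zero_add])
  | v + 1, 0 => commutator_le_left _ _
  | v + 1, w + 1 => by
    rw [show v + 1 + (w + 1) = v + w + 1 + 1 by omega]
    exact commutator_lowerCentralSeries_le v w

theorem lowerCentralTerm_eq_bot {M r : ℕ} (hG : (⊤ : Subgroup G).lowerCentralSeries M = ⊥)
    (hr : M < r) : lowerCentralTerm G r = ⊥ := by
  obtain ⟨r, rfl⟩ := Nat.exists_eq_add_of_lt hr
  exact le_bot_iff.mp (hG ▸ Subgroup.lowerCentralSeries_antitone ⊤ (by omega))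

theorem map_lowerCentralTerm_le (φ : G →* K) (v : ℕ) :
    (lowerCentralTerm G v).map φ ≤ lowerCentralTerm K v := by
  cases v with
  | zero => exact le_top
  | succ v => exact (map_lowerCentralSeries _ φ v).trans_le (lowerCentralSeries_mono v le_top)

theorem map_lowerCentralTerm {φ : G →* K} (hφ : Function.Surjective φ) (v : ℕ) :
    (lowerCentralTerm G v).map φ = lowerCentralTerm K v := by
  cases v with
  | zero => exact map_top_of_surjective φ hφ
  | succ v =>
    exact (map_lowerCentralSeries _ φ v).trans (by rw [map_top_of_surjective φ hφ]; rfl)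

def mulFwdDiff (f : ℕ → G) : ℕ → G := fun n => (f n)⁻¹ * f (n + 1)

@[simp]
theorem mulFwdDiff_const (x : G) : mulFwdDiff (fun _ => x) = fun _ => 1 := by
  funext n
  exact inv_mul_cancel x

theorem mulFwdDiff_comp (φ : G →* K) (f : ℕ → G) : mulFwdDiff (φ ∘ f) = φ ∘ mulFwdDiff f := by
  funext n
  simp [mulFwdDiff]

theorem mulFwdDiff_iterate_comp (φ : G →* K) (f : ℕ → G) (r : ℕ) :
    mulFwdDiff^[r] (φ ∘ f) = φ ∘ mulFwdDiff^[r] f := by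
  induction r generalizing f with
  | zero => rfl
  | succ r ih =>
    rw [Function.iterate_succ_apply, Function.iterate_succ_apply, mulFwdDiff_comp, ih]

theorem mulFwdDiff_iterate_mem {S : Subgroup G} {f : ℕ → G} (hf : ∀ n, f n ∈ S) (r n : ℕ) :
    mulFwdDiff^[r] f n ∈ S := by
  induction r generalizing f with
  | zero => exact hf n
  | succ r ih => exact ih fun n => mul_mem (inv_mem (hf n)) (hf (n + 1))

theorem mulFwdDiff_mul (f g : ℕ → G) :
    mulFwdDiff (f * g) = g⁻¹ * mulFwdDiff f * g * mulFwdDiff g := by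
  funext n
  simp only [mulFwdDiff, Pi.mul_apply, Pi.inv_apply]
  group

theorem mulFwdDiff_inv (f : ℕ → G) : mulFwdDiff f⁻¹ = f * (mulFwdDiff f)⁻¹ * f⁻¹ := by
  funext n
  simp only [mulFwdDiff, Pi.mul_apply, Pi.inv_apply]
  group

theorem mulFwdDiff_commutator (f g : ℕ → G) :
    mulFwdDiff ⁅f, g⁆ =
      ⁅f, g⁆⁻¹ * (f * (⁅mulFwdDiff f, g⁆ * (g * ⁅mulFwdDiff f, mulFwdDiff g⁆ * g⁻¹)) * f⁻¹) *
        ⁅f, g⁆ * (g * ⁅f, mulFwdDiff g⁆ * g⁻¹) := by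
  funext n
  simp only [mulFwdDiff, commutatorElement_def, Pi.mul_apply, Pi.inv_apply]
  group

theorem mulFwdDiff_pow_choose_succ (d : G) (i : ℕ) :
    mulFwdDiff (fun j => d ^ j.choose (i + 1)) = fun j => d ^ j.choose i := by
  funext j
  rw [mulFwdDiff, Nat.choose_succ_succ, pow_add, pow_mul_comm, inv_mul_cancel_left]

/-- `IsPolySeq ρ v f`: `f` is a polynomial sequence of weight `v` up to order `ρ`, i.e. its
`r`-th forward difference takes values in `γ_{v+r}` for every `r ≤ ρ`. -/
def IsPolySeq : ℕ → ℕ → (ℕ → G) → Prop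
  | 0, v, f => ∀ n, f n ∈ lowerCentralTerm G v
  | ρ + 1, v, f => (∀ n, f n ∈ lowerCentralTerm G v) ∧ IsPolySeq ρ (v + 1) (mulFwdDiff f)

namespace IsPolySeq

variable {ρ v : ℕ} {f : ℕ → G}

theorem mem : ∀ {ρ}, IsPolySeq ρ v f → ∀ n, f n ∈ lowerCentralTerm G v
  | 0, h => h
  | _ + 1, h => h.1

theorem mono {ρ' v' : ℕ} (hρ : ρ' ≤ ρ) (hv : v' ≤ v) (h : IsPolySeq ρ v f) :
    IsPolySeq ρ' v' f := by
  induction ρ' generalizing ρ v v' f with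
  | zero => exact fun n => lowerCentralTerm_antitone hv (h.mem n)
  | succ ρ' ih =>
    cases ρ with
    | zero => omega
    | succ ρ => exact ⟨fun n => lowerCentralTerm_antitone hv (h.1 n), ih (by omega) (by omega) h.2⟩

theorem of_succ (h : IsPolySeq (ρ + 1) v f) : IsPolySeq ρ v f := h.mono ρ.le_succ le_rfl

theorem weight_mono {v' : ℕ} (hv : v' ≤ v) (h : IsPolySeq ρ v f) : IsPolySeq ρ v' f :=
  h.mono le_rfl hv

theorem iterate_mem {r : ℕ} (h : IsPolySeq ρ v f) (hr : r ≤ ρ) (n : ℕ) :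
    mulFwdDiff^[r] f n ∈ lowerCentralTerm G (v + r) := by
  induction r generalizing ρ v f with
  | zero => exact h.mem n
  | succ r ih =>
    cases ρ with
    | zero => omega
    | succ ρ =>
      rw [Function.iterate_succ_apply, ← Nat.add_assoc, Nat.add_right_comm]
      exact ih h.2 (by omega)

theorem comp (φ : G →* K) (h : IsPolySeq ρ v f) : IsPolySeq ρ v (φ ∘ f) := by
  induction ρ generalizing v f with
  | zero => exact fun n => map_lowerCentralTerm_le φ v (mem_map_of_mem φ (h n))
  | succ ρ ih =>
    refine ⟨fun n => map_lowerCentralTerm_le φ v (mem_map_of_mem φ (h.1 n)), ?_⟩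
    rw [mulFwdDiff_comp]
    exact ih h.2

end IsPolySeq

variable (G) in
/-- The three closure properties are bundled so that they can be proved by one simultaneous
induction on the order `ρ`. -/
structure PolySeqClosed (ρ : ℕ) : Prop where
  mul {v : ℕ} {f g : ℕ → G} : IsPolySeq ρ v f → IsPolySeq ρ v g → IsPolySeq ρ v (f * g)
  inv {v : ℕ} {f : ℕ → G} : IsPolySeq ρ v f → IsPolySeq ρ v f⁻¹
  commutator {v w : ℕ} {f g : ℕ → G} :
    IsPolySeq ρ v f → IsPolySeq ρ w g → IsPolySeq ρ (v + w) ⁅f, g⁆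

namespace PolySeqClosed

variable {ρ v w : ℕ} {f g : ℕ → G}

theorem conj (h : PolySeqClosed G ρ) (hg : IsPolySeq ρ w g) (hf : IsPolySeq ρ v f) :
    IsPolySeq ρ v (g * f * g⁻¹) := by
  rw [show g * f * g⁻¹ = ⁅g, f⁆ * f by group]
  exact h.mul ((h.commutator hg hf).weight_mono (Nat.le_add_left v w)) hf

theorem inv_conj (h : PolySeqClosed G ρ) (hg : IsPolySeq ρ w g) (hf : IsPolySeq ρ v f) :
    IsPolySeq ρ v (g⁻¹ * f * g) := by
  simpa using h.conj (h.inv hg) hf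

theorem zero : PolySeqClosed G 0 where
  mul hf hg n := mul_mem (hf n) (hg n)
  inv hf n := inv_mem (hf n)
  commutator hf hg n :=
    commutator_lowerCentralTerm_le _ _ (commutator_mem_commutator (hf n) (hg n))

theorem succ (h : PolySeqClosed G ρ) : PolySeqClosed G (ρ + 1) where
  mul hf hg := ⟨fun n => mul_mem (hf.mem n) (hg.mem n), by
    rw [mulFwdDiff_mul]
    exact h.mul (h.inv_conj hg.of_succ hf.2) hg.2⟩
  inv hf := ⟨fun n => inv_mem (hf.mem n), by
    rw [mulFwdDiff_inv]
    exact h.conj hf.of_succ (h.inv hf.2)⟩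
  commutator {v w f g} hf hg := by
    refine ⟨fun n => commutator_lowerCentralTerm_le v w
      (commutator_mem_commutator (hf.mem n) (hg.mem n)), ?_⟩
    have hW : IsPolySeq ρ (v + w + 1)
        (⁅mulFwdDiff f, g⁆ * (g * ⁅mulFwdDiff f, mulFwdDiff g⁆ * g⁻¹)) :=
      h.mul ((h.commutator hf.2 hg.of_succ).weight_mono (by omega))
        (h.conj hg.of_succ ((h.commutator hf.2 hg.2).weight_mono (by omega)))
    have hV : IsPolySeq ρ (v + w + 1) (g * ⁅f, mulFwdDiff g⁆ * g⁻¹) :=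
      (h.conj hg.of_succ (h.commutator hf.of_succ hg.2)).weight_mono (by omega)
    rw [mulFwdDiff_commutator]
    exact h.mul (h.inv_conj (h.commutator hf.of_succ hg.of_succ) (h.conj hf.of_succ hW)) hV

end PolySeqClosed

theorem polySeqClosed (ρ : ℕ) : PolySeqClosed G ρ := by
  induction ρ with
  | zero => exact .zero
  | succ ρ ih => exact ih.succ

theorem isPolySeq_pow_choose {d : G} {v i : ℕ} (hd : d ∈ lowerCentralTerm G (v + i)) (ρ : ℕ) :
    IsPolySeq ρ v (fun j : ℕ => d ^ j.choose i) := by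
  induction ρ generalizing d v i with
  | zero => exact fun j => pow_mem (lowerCentralTerm_antitone (Nat.le_add_right v i) hd) _
  | succ ρ ih =>
    refine ⟨fun j => pow_mem (lowerCentralTerm_antitone (Nat.le_add_right v i) hd) _, ?_⟩
    cases i with
    | zero => simpa using ih (d := 1) (i := 0) (one_mem _)
    | succ i =>
      rw [mulFwdDiff_pow_choose_succ]
      exact ih (by rwa [Nat.add_right_comm])

theorem IsPolySeq.list_prod {ι : Type*} {ρ v : ℕ} {F : ι → ℕ → G} (l : List ι)
    (hF : ∀ i ∈ l, IsPolySeq ρ v (F i)) :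
    IsPolySeq ρ v (fun j => (l.map fun i => F i j).prod) := by
  induction l with
  | nil => simpa using isPolySeq_pow_choose (d := (1 : G)) (i := 0) (one_mem _) ρ
  | cons i l ih =>
    exact (polySeqClosed ρ).mul (hF i List.mem_cons_self)
      (ih fun i' hi' => hF i' (List.mem_cons_of_mem i hi'))

end PolynomialSequences

section NewtonFormula

theorem fwdDiff_iterate_ofMul_comp {A : Type*} [CommGroup A] (f : ℕ → A) (r : ℕ) :
    (fwdDiff 1)^[r] (Additive.ofMul ∘ f) = Additive.ofMul ∘ mulFwdDiff^[r] f := by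
  induction r generalizing f with
  | zero => rfl
  | succ r ih =>
    rw [Function.iterate_succ_apply, Function.iterate_succ_apply, ← ih]
    congr 1
    funext n
    simp [fwdDiff, mulFwdDiff, sub_eq_neg_add]

theorem prod_range_pow_choose_mulFwdDiff_iterate {A : Type*} [CommGroup A] {f : ℕ → A} {N : ℕ}
    (hN : ∀ r, N ≤ r → mulFwdDiff^[r] f 0 = 1) (j : ℕ) :
    ∏ r ∈ Finset.range N, mulFwdDiff^[r] f 0 ^ j.choose r = f j := by
  have newton := shift_eq_sum_fwdDiff_iter 1 (Additive.ofMul ∘ f) j 0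
  simp only [fwdDiff_iterate_ofMul_comp, zero_add, smul_eq_mul, mul_one, Function.comp_apply,
    ← ofMul_pow, ← ofMul_prod, EmbeddingLike.apply_eq_iff_eq] at newton
  rw [newton]
  calc _ = ∏ r ∈ Finset.range (N + j + 1), mulFwdDiff^[r] f 0 ^ j.choose r := by
        refine Finset.prod_subset (Finset.range_subset_range.2 (by omega)) fun r _ hr => ?_
        rw [hN r (by simpa using hr), one_pow]
    _ = _ := by
        refine (Finset.prod_subset (Finset.range_subset_range.2 (by omega)) fun r _ hr => ?_).symm
        rw [Nat.choose_eq_zero_of_lt (by simpa [Nat.lt_succ_iff] using hr), pow_zero]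

open scoped IsMulCommutative in
theorem list_prod_pow_choose_mulFwdDiff_iterate_of_mem_center {K : Type*} [Group K]
    {z : ℕ → K} (hz : ∀ j, z j ∈ center K) {N : ℕ}
    (hN : ∀ r, N ≤ r → mulFwdDiff^[r] z 0 = 1) (j : ℕ) :
    ((List.range N).map fun r => mulFwdDiff^[r] z 0 ^ j.choose r).prod = z j := by
  let z' : ℕ → center K := fun j => ⟨z j, hz j⟩
  have hz' : ∀ r, (center K).subtype ∘ mulFwdDiff^[r] z' = mulFwdDiff^[r] z := fun r => by
    rw [← mulFwdDiff_iterate_comp]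
    rfl
  have hval : ∀ r, ((mulFwdDiff^[r] z' 0 : center K) : K) = mulFwdDiff^[r] z 0 :=
    fun r => congrFun (hz' r) 0
  have newton := congrArg (center K).subtype <|
    prod_range_pow_choose_mulFwdDiff_iterate (f := z') (N := N)
      (fun r hr => Subtype.ext (by simpa [hval] using hN r hr)) j
  rw [Finset.prod_eq_multiset_prod, Finset.range_val, Multiset.range, Multiset.map_coe,
    Multiset.prod_coe, map_list_prod, List.map_map] at newton
  simpa [Function.comp_def, hval] using newton

end NewtonFormula

section HallPetrescu

variable {K : Type*} [Group K]

theorem list_prod_map_mul_of_mem_center {ι : Type*} (l : List ι) {a b : ι → K}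
    (hb : ∀ i ∈ l, b i ∈ center K) :
    (l.map fun i => a i * b i).prod = (l.map a).prod * (l.map b).prod := by
  induction l with
  | nil => simp
  | cons i l ih =>
    have hc : b i * (l.map a).prod = (l.map a).prod * b i :=
      (mem_center_iff.mp (hb i List.mem_cons_self) _).symm
    simp only [List.map_cons, List.prod_cons, ih fun i' hi' => hb i' (List.mem_cons_of_mem i hi')]
    rw [mul_assoc, ← mul_assoc (b i), hc]
    simp only [mul_assoc]

theorem exists_list_prod_pow_choose_eq_of_mem_center {M : ℕ}
    (hK : (⊤ : Subgroup K).lowerCentralSeries M = ⊥) {f : ℕ → K} (hf : ∀ ρ, IsPolySeq ρ 0 f)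
    {d : ℕ → K} (hd : ∀ i, d i ∈ lowerCentralTerm K i)
    (hdf : ∀ j, ((List.range (M + 1)).map fun i => d i ^ j.choose i).prod⁻¹ * f j ∈ center K) :
    ∃ d' : ℕ → K, (∀ i, d' i ∈ lowerCentralTerm K i) ∧
      ∀ j, ((List.range (M + 1)).map fun i => d' i ^ j.choose i).prod = f j := by
  set P : ℕ → K := fun j => ((List.range (M + 1)).map fun i => d i ^ j.choose i).prod
  set z : ℕ → K := P⁻¹ * f
  have hz : ∀ ρ, IsPolySeq ρ 0 z := fun ρ =>
    (polySeqClosed ρ).mul ((polySeqClosed ρ).inv <| IsPolySeq.list_prod _ fun i _ =>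
      isPolySeq_pow_choose (by simpa using hd i) ρ) (hf ρ)
  have hvanish : ∀ r, M + 1 ≤ r → mulFwdDiff^[r] z 0 = 1 := fun r hr => by
    simpa [lowerCentralTerm_eq_bot hK (by omega : M < r)] using (hz r).iterate_mem le_rfl 0
  have hzc : ∀ j, z j ∈ center K := hdf
  have hcen : ∀ i, mulFwdDiff^[i] z 0 ∈ center K := fun i => mulFwdDiff_iterate_mem hzc i 0
  refine ⟨fun i => d i * mulFwdDiff^[i] z 0,
    fun i => mul_mem (hd i) (by simpa using (hz i).iterate_mem le_rfl 0), fun j => ?_⟩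
  rw [show f j = P j * z j by simp [z], ← list_prod_pow_choose_mulFwdDiff_iterate_of_mem_center
    hzc hvanish j, ← list_prod_map_mul_of_mem_center _ fun i _ => pow_mem (hcen i) _]
  exact congrArg List.prod (List.map_congr_left fun i _ =>
    Commute.mul_pow (mem_center_iff.mp (hcen i) (d i)) _)

theorem exists_list_prod_pow_choose_eq_of_isPolySeq {M : ℕ}
    (hK : (⊤ : Subgroup K).lowerCentralSeries M = ⊥) {f : ℕ → K} (hf : ∀ ρ, IsPolySeq ρ 0 f) :
    ∃ d : ℕ → K, (∀ i, d i ∈ lowerCentralTerm K i) ∧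
      ∀ j, ((List.range (M + 1)).map fun i => d i ^ j.choose i).prod = f j := by
  induction M generalizing K with
  | zero =>
    have htriv : ∀ x : K, x = 1 := fun x => mem_bot.mp (hK ▸ mem_top x)
    exact ⟨1, fun i => one_mem _, fun j => by simp [htriv (f j)]⟩
  | succ M ih =>
    set Z := (⊤ : Subgroup K).lowerCentralSeries M
    set π := QuotientGroup.mk' Z
    have hπ : Function.Surjective π := QuotientGroup.mk'_surjective Z
    have hK' : (⊤ : Subgroup (K ⧸ Z)).lowerCentralSeries M = ⊥ := by
      rw [← map_top_of_surjective π hπ, ← map_lowerCentralSeries, Subgroup.map_eq_bot_iff,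
        QuotientGroup.ker_mk']
    obtain ⟨e, he, hfe⟩ := ih hK' (f := fun j => π (f j)) (fun ρ => (hf ρ).comp π)
    choose d hd hde using fun i => mem_map.mp ((map_lowerCentralTerm hπ i).symm ▸ he i)
    refine exists_list_prod_pow_choose_eq_of_mem_center hK hf hd fun j => ?_
    have hlast : e (M + 1) = 1 := mem_bot.mp (lowerCentralTerm_eq_bot hK' M.lt_succ_self ▸ he _)
    have hdf : π ((List.range (M + 1 + 1)).map fun i => d i ^ j.choose i).prod = π (f j) := by
      rw [← hfe j]
      simp [List.range_succ (n := M + 1), map_list_prod, Function.comp_def, hde, hlast]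
    refine commutator_top_right_eq_bot_iff_le_center.mp hK ((QuotientGroup.ker_mk' Z).le ?_)
    rw [MonoidHom.mem_ker, map_mul, map_inv, hdf, inv_mul_cancel]

theorem hall_petrescu {M : ℕ} (hK : (⊤ : Subgroup K).lowerCentralSeries M = ⊥) (a b : K)
    {S : Subgroup K} {n : ℕ} (hS : ∀ i, 2 ≤ i → ∀ d ∈ lowerCentralTerm K i, d ^ n.choose i ∈ S) :
    (a ^ n * b ^ n)⁻¹ * (a * b) ^ n ∈ S := by
  have hpow : ∀ (x : K) ρ, IsPolySeq ρ 0 (fun j : ℕ => x ^ j) := fun x ρ => by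
    simpa using isPolySeq_pow_choose (v := 0) (i := 1) (mem_top x) ρ
  set f : ℕ → K := fun j => (a ^ j * b ^ j)⁻¹ * (a * b) ^ j
  have hf : ∀ ρ, IsPolySeq ρ 0 f := fun ρ => (polySeqClosed ρ).mul
    ((polySeqClosed ρ).inv ((polySeqClosed ρ).mul (hpow a ρ) (hpow b ρ))) (hpow (a * b) ρ)
  -- the weaker class bound `M + 1` makes both indices `0` and `1` occur in the expansion
  obtain ⟨d, hd, hfd⟩ := exists_list_prod_pow_choose_eq_of_isPolySeq
    (le_bot_iff.mp (hK ▸ Subgroup.lowerCentralSeries_antitone ⊤ M.le_succ)) hf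
  simp only [List.range_succ_eq_map, List.map_cons, List.map_map, List.prod_cons,
    Function.comp_def] at hfd
  have h0 : d 0 = 1 := by simpa [f] using hfd 0
  have h1 : d 1 = 1 := by
    simpa [f, h0, fun i => Nat.choose_eq_zero_of_lt (by omega : 1 < i + 1 + 1)] using hfd 1
  change f n ∈ S
  rw [← hfd n]
  simp only [Nat.succ_eq_add_one, zero_add, h0, h1, one_pow, one_mul]
  exact list_prod_mem (by simpa using fun i _ => hS (i + 2) (by omega) _ (hd _))

end HallPetrescu

section PowersInNilpotentGroups

variable {H : Type*} [Group H]

theorem mul_pow_mem_of_pow_mul_pow_mem {M : Subgroup H} {m n t : ℕ}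
    (hH : (⊤ : Subgroup H).lowerCentralSeries m = ⊥) {a b : H}
    (ha : a ∈ (⊤ : Subgroup H).lowerCentralSeries t)
    (hb : b ∈ (⊤ : Subgroup H).lowerCentralSeries t)
    (hab : ⁅a, b⁆ ∈ (⊤ : Subgroup H).lowerCentralSeries (2 * t + 2))
    (hM : ∀ i, 2 ≤ i → ∀ d ∈ (⊤ : Subgroup H).lowerCentralSeries (i * (t + 1)),
      d ^ n.choose i ∈ M)
    (habn : a ^ n * b ^ n ∈ M) : (a * b) ^ n ∈ M := by
  set B := closure ({a, b} : Set H)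
  have hB : (⊤ : Subgroup B).lowerCentralSeries m = ⊥ := by
    rw [← (map_injective B.subtype_injective).eq_iff, top_subtype_lowerCentralSeries,
      Subgroup.map_bot, ← le_bot_iff, ← hH]
    exact lowerCentralSeries_mono m le_top
  have hdefect := hall_petrescu hB ⟨a, subset_closure (by simp)⟩ ⟨b, subset_closure (by simp)⟩
    (S := M.comap B.subtype) (n := n) fun i hi d hd => by
      obtain ⟨j, rfl⟩ : ∃ j, i = j + 2 := ⟨i - 2, by omega⟩
      have hdB : (d : H) ∈ B.lowerCentralSeries (j + 1) := by
        rw [← top_subtype_lowerCentralSeries]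
        exact mem_map_of_mem _ hd
      exact hM _ hi _ (lowerCentralSeries_closure_pair_le ha hb hab j hdB)
  rw [show (a * b) ^ n = a ^ n * b ^ n * ((a ^ n * b ^ n)⁻¹ * (a * b) ^ n) by group]
  exact mul_mem habn hdefect

theorem pow_mem_of_mem_lowerCentralSeries_succ {M : Subgroup H} {m n t : ℕ}
    (hH : (⊤ : Subgroup H).lowerCentralSeries m = ⊥)
    (hM : ∀ i, 2 ≤ i → ∀ d ∈ (⊤ : Subgroup H).lowerCentralSeries (i * (t + 1)),
      d ^ n.choose i ∈ M)
    (hcomm : ∀ p ∈ (⊤ : Subgroup H).lowerCentralSeries t, ∀ q : H, ⁅p ^ n, q⁆ ∈ M) {u : H}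
    (hu : u ∈ (⊤ : Subgroup H).lowerCentralSeries (t + 1)) : u ^ n ∈ M := by
  rw [Subgroup.mem_lowerCentralSeries_succ_iff] at hu
  induction hu using closure_induction with
  | mem x hx =>
    obtain ⟨p, hp, q, -, rfl⟩ := hx
    have hpq : q * p⁻¹ * q⁻¹ ∈ (⊤ : Subgroup H).lowerCentralSeries t :=
      (Subgroup.lowerCentralSeries_normal ⊤ t).conj_mem _ (inv_mem hp) q
    rw [show ⁅p, q⁆ = p * (q * p⁻¹ * q⁻¹) by group]
    refine mul_pow_mem_of_pow_mul_pow_mem hH hp hpq ?_ hM ?_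
    · -- `q p⁻¹ q⁻¹ ≡ p⁻¹` modulo `γ_{t+2}`, so this commutator is one step deeper than usual
      rw [show ⁅p, q * p⁻¹ * q⁻¹⁆ = ⁅⁅p, q⁆, p⁻¹⁆ by group, show 2 * t + 2 = t + 1 + t + 1 by omega]
      exact commutator_lowerCentralSeries_le _ _ (commutator_mem_commutator
        (commutator_mem_commutator hp (mem_top q)) (inv_mem hp))
    · rw [conj_pow, inv_pow, show p ^ n * (q * (p ^ n)⁻¹ * q⁻¹) = ⁅p ^ n, q⁆ by group]
      exact hcomm p hp q
  | one => simp
  | mul x y hx hy ihx ihy =>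
    rw [← Subgroup.mem_lowerCentralSeries_succ_iff] at hx hy
    refine mul_pow_mem_of_pow_mul_pow_mem hH (Subgroup.lowerCentralSeries_antitone ⊤ t.le_succ hx)
      (Subgroup.lowerCentralSeries_antitone ⊤ t.le_succ hy) ?_ hM (mul_mem ihx ihy)
    exact Subgroup.lowerCentralSeries_antitone ⊤ (by omega)
      (commutator_lowerCentralSeries_le _ _ (commutator_mem_commutator hx hy))
  | inv x _ ihx =>
    rw [inv_pow]
    exact inv_mem ihx

theorem pow_mem_iteratedCommutator {N : Subgroup H} {k m n : ℕ}
    (hH : (⊤ : Subgroup H).lowerCentralSeries m = ⊥)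
    (hN : (⊤ : Subgroup H).lowerCentralSeries k ≤ N) (hpow : ∀ x : H, x ^ n ∈ N)
    (hdvd : ∀ i, 2 ≤ i → i ≤ k → n ∣ n.choose i) :
    ∀ s t, s ≤ t → ∀ u ∈ (⊤ : Subgroup H).lowerCentralSeries t, u ^ n ∈ iteratedCommutator N s
  | 0, _, _, u, _ => hpow u
  | s + 1, t, hst, u, hu => by
    have ih := pow_mem_iteratedCommutator hH hN hpow hdvd s
    -- downward induction on `t`, starting from `γ_{k+s+2}(H) ≤ [N, (s+1)H]`
    suffices key : ∀ j t, k + s + 1 ≤ t + j → s + 1 ≤ t →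
        ∀ u ∈ (⊤ : Subgroup H).lowerCentralSeries t, u ^ n ∈ iteratedCommutator N (s + 1) from
      key (k + s + 1) t (Nat.le_add_left _ _) hst u hu
    intro j
    induction j with
    | zero =>
      intro t ht _ u hu
      exact pow_mem (lowerCentralSeries_le_iteratedCommutator hN (s + 1)
        (Subgroup.lowerCentralSeries_antitone ⊤ (by omega) hu)) n
    | succ j ihj =>
      rintro (_ | t) ht hst
      · omega
      refine fun u => pow_mem_of_mem_lowerCentralSeries_succ hH (fun i hi d hd => ?_)
        fun p hp q => commutator_mem_commutator (ih t (by omega) p hp) (mem_top q)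
      by_cases hik : i ≤ k
      · obtain ⟨q, hq⟩ := hdvd i hi hik
        rw [hq, pow_mul]
        exact pow_mem (ihj _ (by nlinarith) (by nlinarith) d hd) q
      · exact pow_mem (lowerCentralSeries_le_iteratedCommutator hN (s + 1)
          (Subgroup.lowerCentralSeries_antitone ⊤ (by nlinarith) hd)) _

end PowersInNilpotentGroups

theorem self_dvd_choose_of_forall_prime_dvd_lt {n i : ℕ} (hi : 0 < i)
    (h : ∀ p, p.Prime → p ∣ n → i < p) : n ∣ n.choose i := by
  have hcop : n.Coprime i := Nat.coprime_of_dvd fun p hp hpn hpi =>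
    (h p hp hpn).not_ge (Nat.le_of_dvd hi hpi)
  obtain ⟨i, rfl⟩ := Nat.exists_eq_add_of_lt hi
  rcases n with _ | n
  · simp
  · refine hcop.dvd_of_dvd_mul_right ⟨n.choose i, ?_⟩
    simpa using (Nat.add_one_mul_choose_eq n i).symm

theorem nilpotentMultiplier_exponent_dvd_of_small_class_general {F : Type*} [Group F]
    (R : Subgroup F) [R.Normal] (k c : ℕ)
    (hnil : (⊤ : Subgroup F).lowerCentralSeries k ≤ R)
    (hprimes : ∀ p : ℕ, p.Prime → p ∣ Nat.card (F ⧸ R) → k + 1 ≤ p)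
    (g : F) (hg : g ∈ R ⊓ (⊤ : Subgroup F).lowerCentralSeries c) :
    g ^ Monoid.exponent (F ⧸ R) ∈ iteratedCommutator R c := by
  set π := QuotientGroup.mk' (iteratedCommutator R c)
  have hπ : Function.Surjective π := QuotientGroup.mk'_surjective _
  have hker : π.ker = iteratedCommutator R c := QuotientGroup.ker_mk' _
  have hlcs : ∀ i, (⊤ : Subgroup (F ⧸ iteratedCommutator R c)).lowerCentralSeries i =
      ((⊤ : Subgroup F).lowerCentralSeries i).map π := fun i => by
    rw [map_lowerCentralSeries, map_top_of_surjective π hπ]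
  have hH : (⊤ : Subgroup (F ⧸ iteratedCommutator R c)).lowerCentralSeries (k + c) = ⊥ := by
    rw [hlcs, Subgroup.map_eq_bot_iff, hker]
    exact lowerCentralSeries_le_iteratedCommutator hnil c
  have hpow : ∀ x, x ^ Monoid.exponent (F ⧸ R) ∈ R.map π := fun x => by
    obtain ⟨x, rfl⟩ := hπ x
    rw [← map_pow]
    exact mem_map_of_mem π ((QuotientGroup.eq_one_iff _).mp
      (by rw [QuotientGroup.mk_pow]; exact Monoid.pow_exponent_eq_one _))
  have hdvd : ∀ i, 2 ≤ i → i ≤ k → Monoid.exponent (F ⧸ R) ∣ (Monoid.exponent (F ⧸ R)).choose i :=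
    fun i hi hik => self_dvd_choose_of_forall_prime_dvd_lt (by omega) fun p hp hpn =>
      hik.trans_lt (hprimes p hp (hpn.trans Group.exponent_dvd_nat_card))
  have hmem := pow_mem_iteratedCommutator hH (hlcs k ▸ map_mono hnil) hpow hdvd c c le_rfl (π g)
    (hlcs c ▸ mem_map_of_mem π hg.2)
  rwa [← map_iteratedCommutator hπ, (Subgroup.map_eq_bot_iff _).mpr hker.ge, mem_bot, ← map_pow,
    ← MonoidHom.mem_ker, hker] at hmem

/-- Concluding claim of Remark 3.5: let `G = F/R` be a finite nilpotent group of
class at most `k` (`F` free, `R` normal of finite index, `γ_{k+1}(F) ≤ R`) all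
of whose prime divisors `p` satisfy `p ≥ k + 1`.  Then every
`g ∈ R ∩ γ_{c+1}(F)` satisfies `g^(exp(G)) ∈ [R, cF]`; that is, the exponent of
`M^(c)(G) = (R ∩ γ_{c+1}(F))/[R, cF]` divides `exp(G)`. -/
theorem nilpotentMultiplier_exponent_dvd_of_small_class {F : Type*} [Group F]
    [IsFreeGroup F] (R : Subgroup F) [R.Normal] [R.FiniteIndex] (k c : ℕ)
    (hk : 1 ≤ k) (hc : 1 ≤ c)
    (hnil : (⊤ : Subgroup F).lowerCentralSeries k ≤ R)
    (hprimes : ∀ p : ℕ, p.Prime → p ∣ Nat.card (F ⧸ R) → k + 1 ≤ p)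
    (g : F) (hg : g ∈ R ⊓ (⊤ : Subgroup F).lowerCentralSeries c) :
    g ^ Monoid.exponent (F ⧸ R) ∈ iteratedCommutator R c :=
  nilpotentMultiplier_exponent_dvd_of_small_class_general R k c hnil hprimes g hg
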